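/- arXiv:2412.07315 — 2 statements merged into one kernel-verified Lean document; each statement's English description precedes it below -/
import Mathlib

section
/- Let f : I → ℝ be strictly increasing and n ∈ ℕ. Then A_{f₋}^{[n]} is lower semicontinuous on Iⁿ and A_{f₊}^{[n]} is upper semicontinuous on Iⁿ. -/
open Set Filter Topology

/-- `finv` is the generalized inverse of the strictly increasing function `f : I → ℝ`:
an increasing continuous left inverse of `f` mapping `conv (f '' I)` into `I`. -/
def IsGenInv (I : Set ℝ) (f finv : ℝ → ℝ) : Prop :=
  MonotoneOn finv (convexHull ℝ (f '' I)) ∧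
  ContinuousOn finv (convexHull ℝ (f '' I)) ∧
  Set.MapsTo finv (convexHull ℝ (f '' I)) I ∧
  ∀ x ∈ I, finv (f x) = x

/-- The `n`-variable generalized quasiarithmetic mean `A_f^{[n]}` generated by `f`,
where `finv` is the generalized inverse of `f`. -/
noncomputable def qam (finv f : ℝ → ℝ) (n : ℕ) (x : Fin n → ℝ) : ℝ :=
  finv ((∑ i, f (x i)) / n)

/-!
If `y < f₋ x`, choose `z < x` in `I` with `y < f z`; monotonicity gives `f z ≤ f₋ x'` for every
`x' > z` in `I`, so `f₋` is lower semicontinuous, and `f z ≤ f₋ x ≤ f x` puts its values in the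
interval `conv (f '' I)`. Averages of lower semicontinuous functions are lower semicontinuous, and
so is their composition with the generalized inverse, which is increasing and continuous on that
interval. The statement for `f₊` is the order dual.
-/

section Composition

variable {α γ δ : Type*} [TopologicalSpace α]
  [LinearOrder γ] [TopologicalSpace γ] [OrderTopology γ] [Preorder δ]
  {g : γ → δ} {f : α → γ} {s : Set α} {t : Set γ} {x : α}

theorem LowerSemicontinuousWithinAt.comp_of_monotoneOn
    (hg : LowerSemicontinuousWithinAt g t (f x)) (hf : LowerSemicontinuousWithinAt f s x)
    (gmon : MonotoneOn g t) (hst : MapsTo f s t) (hx : f x ∈ t) :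
    LowerSemicontinuousWithinAt (g ∘ f) s x := by
  intro y hy
  have hgy : {c | c ∈ t → y < g c} ∈ 𝓝 (f x) := eventually_nhdsWithin_iff.mp (hg y hy)
  by_cases! hmin : ∃ l, l < f x
  · obtain ⟨l, hlx, hl⟩ := exists_Ioc_subset_of_mem_nhds hgy hmin
    filter_upwards [hf l hlx, self_mem_nhdsWithin] with a hla ha
    rcases le_or_gt (f a) (f x) with hax | hxa
    · exact hl ⟨hla, hax⟩ (hst ha)
    · exact hy.trans_le (gmon hx (hst ha) hxa.le)
  · filter_upwards [self_mem_nhdsWithin] with a ha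
    exact hy.trans_le (gmon hx (hst ha) (hmin (f a)))

theorem UpperSemicontinuousWithinAt.comp_of_monotoneOn
    (hg : UpperSemicontinuousWithinAt g t (f x)) (hf : UpperSemicontinuousWithinAt f s x)
    (gmon : MonotoneOn g t) (hst : MapsTo f s t) (hx : f x ∈ t) :
    UpperSemicontinuousWithinAt (g ∘ f) s x :=
  LowerSemicontinuousWithinAt.comp_of_monotoneOn (γ := γᵒᵈ) (δ := δᵒᵈ) hg hf gmon.dual hst hx

end Composition

section LeftLimits

variable {α β : Type*} [LinearOrder α] [TopologicalSpace α] [OrderTopology α] [DenselyOrdered α]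
  [NoMinOrder α] [LinearOrder β] [TopologicalSpace β] [OrderClosedTopology β]
  {I : Set α} {f fm : α → β}

theorem MonotoneOn.mem_Icc_of_tendsto_nhdsLT (hIc : I.OrdConnected) (hf : MonotoneOn f I)
    {x z : α} {c : β} (hfc : Tendsto f (𝓝[<] x) (𝓝 c)) (hz : z ∈ I) (hx : x ∈ I) (hzx : z < x) :
    c ∈ Icc (f z) (f x) := by
  have hIoo : ∀ᶠ w in 𝓝[<] x, w ∈ Ioo z x := Ioo_mem_nhdsLT hzx
  have hwI : ∀ w ∈ Ioo z x, w ∈ I := fun w hw => hIc.out hz hx (Ioo_subset_Icc_self hw)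
  constructor
  · exact ge_of_tendsto hfc (hIoo.mono fun w hw => hf hz (hwI w hw) hw.1.le)
  · exact le_of_tendsto hfc (hIoo.mono fun w hw => hf (hwI w hw) hx hw.2.le)

variable (hIo : IsOpen I) (hIc : I.OrdConnected) (hf : MonotoneOn f I)
  (hfm : ∀ x ∈ I, Tendsto f (𝓝[<] x) (𝓝 (fm x)))
include hIo hIc hf hfm

theorem MonotoneOn.mapsTo_of_tendsto_nhdsLT {C : Set β} (hC : C.OrdConnected)
    (hfC : MapsTo f I C) : MapsTo fm I C := by
  intro x hx
  have hI : ∀ᶠ w in 𝓝[<] x, w ∈ I := mem_nhdsWithin_of_mem_nhds (hIo.mem_nhds hx)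
  obtain ⟨z, hz, hzx⟩ := (hI.and self_mem_nhdsWithin).exists
  exact hC.out (hfC hz) (hfC hx) (hf.mem_Icc_of_tendsto_nhdsLT hIc (hfm x hx) hz hx hzx)

theorem MonotoneOn.lowerSemicontinuousOn_of_tendsto_nhdsLT : LowerSemicontinuousOn fm I := by
  intro x hx y hy
  have hI : ∀ᶠ w in 𝓝[<] x, w ∈ I := mem_nhdsWithin_of_mem_nhds (hIo.mem_nhds hx)
  obtain ⟨z, hyz, hz, hzx⟩ :=
    (((hfm x hx).eventually (eventually_gt_nhds hy)).and (hI.and self_mem_nhdsWithin)).exists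
  filter_upwards [inter_mem_nhdsWithin I (Ioi_mem_nhds hzx)] with a ⟨ha, hza⟩
  exact hyz.trans_le (hf.mem_Icc_of_tendsto_nhdsLT hIc (hfm a ha) hz ha hza).1

end LeftLimits

section RightLimits

variable {α β : Type*} [LinearOrder α] [TopologicalSpace α] [OrderTopology α] [DenselyOrdered α]
  [NoMaxOrder α] [LinearOrder β] [TopologicalSpace β] [OrderClosedTopology β]
  {I : Set α} {f fp : α → β}
  (hIo : IsOpen I) (hIc : I.OrdConnected) (hf : MonotoneOn f I)
  (hfp : ∀ x ∈ I, Tendsto f (𝓝[>] x) (𝓝 (fp x)))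
include hIo hIc hf hfp

theorem MonotoneOn.mapsTo_of_tendsto_nhdsGT {C : Set β} (hC : C.OrdConnected)
    (hfC : MapsTo f I C) : MapsTo fp I C :=
  MonotoneOn.mapsTo_of_tendsto_nhdsLT (α := αᵒᵈ) (β := βᵒᵈ) hIo hIc.dual hf.dual hfp hC.dual hfC

theorem MonotoneOn.upperSemicontinuousOn_of_tendsto_nhdsGT : UpperSemicontinuousOn fp I :=
  MonotoneOn.lowerSemicontinuousOn_of_tendsto_nhdsLT (α := αᵒᵈ) (β := βᵒᵈ) hIo hIc.dual hf.dual hfp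

end RightLimits

section Average

variable {I : Set ℝ} {g : ℝ → ℝ}

theorem LowerSemicontinuousOn.average_pi (hg : LowerSemicontinuousOn g I) (n : ℕ) :
    LowerSemicontinuousOn (fun x : Fin n → ℝ => (∑ i, g (x i)) / n) (univ.pi fun _ => I) := by
  have hsum : LowerSemicontinuousOn (fun x : Fin n → ℝ => ∑ i, g (x i)) (univ.pi fun _ => I) :=
    lowerSemicontinuousOn_sum fun i _ =>
      hg.comp (continuous_apply i).continuousOn fun x hx => hx i trivial
  exact (continuous_id.div_const _).comp_lowerSemicontinuousOn hsum
    fun _ _ hab => div_le_div_of_nonneg_right hab n.cast_nonneg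

theorem UpperSemicontinuousOn.average_pi (hg : UpperSemicontinuousOn g I) (n : ℕ) :
    UpperSemicontinuousOn (fun x : Fin n → ℝ => (∑ i, g (x i)) / n) (univ.pi fun _ => I) := by
  have hsum : UpperSemicontinuousOn (fun x : Fin n → ℝ => ∑ i, g (x i)) (univ.pi fun _ => I) :=
    upperSemicontinuousOn_sum fun i _ =>
      hg.comp (continuous_apply i).continuousOn fun x hx => hx i trivial
  exact (continuous_id.div_const _).comp_upperSemicontinuousOn hsum
    fun _ _ hab => div_le_div_of_nonneg_right hab n.cast_nonneg

theorem Convex.sum_div_mem {C : Set ℝ} (hC : Convex ℝ C) {n : ℕ} (hn : 0 < n) {z : Fin n → ℝ}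
    (hz : ∀ i, z i ∈ C) : (∑ i, z i) / n ∈ C := by
  have := hC.centerMass_mem (t := Finset.univ) (w := fun _ => (1 : ℝ)) (by simp) (by simp [hn])
    (fun i _ => hz i)
  simpa [Finset.centerMass, div_eq_inv_mul] using this

end Average

theorem stmt12_general (I : Set ℝ) (hIo : IsOpen I) (hIc : I.OrdConnected)
    (f fm fp finv : ℝ → ℝ) (hf : StrictMonoOn f I)
    (hfm : ∀ x ∈ I, Tendsto f (𝓝[<] x) (𝓝 (fm x)))
    (hfp : ∀ x ∈ I, Tendsto f (𝓝[>] x) (𝓝 (fp x)))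
    (hinv : IsGenInv I f finv)
    (n : ℕ) :
    LowerSemicontinuousOn (qam finv fm n) (Set.univ.pi fun _ : Fin n => I) ∧
    UpperSemicontinuousOn (qam finv fp n) (Set.univ.pi fun _ : Fin n => I) := by
  obtain rfl | hn := n.eq_zero_or_pos
  · exact ⟨fun x _ y hy => .of_forall fun x' => Subsingleton.elim x x' ▸ hy,
      fun x _ y hy => .of_forall fun x' => Subsingleton.elim x x' ▸ hy⟩
  obtain ⟨hmono, hcont, -, -⟩ := hinv
  set C := convexHull ℝ (f '' I)
  have hC : Convex ℝ C := convex_convexHull ℝ _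
  have hfC : MapsTo f I C := fun x hx => subset_convexHull ℝ _ (mem_image_of_mem f hx)
  have haverage {g : ℝ → ℝ} (hg : MapsTo g I C) :
      MapsTo (fun x : Fin n → ℝ => (∑ i, g (x i)) / n) (univ.pi fun _ => I) C :=
    fun x hx => hC.sum_div_mem hn fun i => hg (hx i trivial)
  have hfmC := haverage (hf.monotoneOn.mapsTo_of_tendsto_nhdsLT hIo hIc hfm hC.ordConnected hfC)
  have hfpC := haverage (hf.monotoneOn.mapsTo_of_tendsto_nhdsGT hIo hIc hfp hC.ordConnected hfC)
  refine ⟨fun x hx => ?_, fun x hx => ?_⟩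
  · exact LowerSemicontinuousWithinAt.comp_of_monotoneOn
      (hcont.lowerSemicontinuousOn _ (hfmC hx))
      ((hf.monotoneOn.lowerSemicontinuousOn_of_tendsto_nhdsLT hIo hIc hfm).average_pi n x hx)
      hmono hfmC (hfmC hx)
  · exact UpperSemicontinuousWithinAt.comp_of_monotoneOn
      (hcont.upperSemicontinuousOn _ (hfpC hx))
      ((hf.monotoneOn.upperSemicontinuousOn_of_tendsto_nhdsGT hIo hIc hfp).average_pi n x hx)
      hmono hfpC (hfpC hx)

/-- `A_{f₋}^{[n]}` is lower semicontinuous and `A_{f₊}^{[n]}` is upper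
semicontinuous on `Iⁿ`. -/
theorem stmt12 (I : Set ℝ) (hIo : IsOpen I) (hIc : I.OrdConnected) (hne : I.Nonempty)
    (f fm fp finv : ℝ → ℝ) (hf : StrictMonoOn f I)
    (hfm : ∀ x ∈ I, Tendsto f (𝓝[<] x) (𝓝 (fm x)))
    (hfp : ∀ x ∈ I, Tendsto f (𝓝[>] x) (𝓝 (fp x)))
    (hinv : IsGenInv I f finv)
    (n : ℕ) (hn : 1 ≤ n) :
    LowerSemicontinuousOn (qam finv fm n) (Set.univ.pi fun _ : Fin n => I) ∧
    UpperSemicontinuousOn (qam finv fp n) (Set.univ.pi fun _ : Fin n => I) :=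
  stmt12_general I hIo hIc f fm fp finv hf hfm hfp hinv n
end

section
/- Let f, g : I → ℝ be strictly increasing, n ≥ 2, and assume A_f^{[n]}(x) ≤ A_g^{[n]}(x) for all x ∈ Iⁿ. Then for every t ∈ I: if g is lower semicontinuous at t then so is f; if f is upper semicontinuous at t then so is g; and f is continuous at t if and only if g is continuous at t. -/
open Set Filter Topology

section Aux

variable {I : Set ℝ} {f finv : ℝ → ℝ} {t s L u v : ℝ}

lemma hull_mem (hu : u ∈ I) : f u ∈ convexHull ℝ (f '' I) :=
  subset_convexHull ℝ _ ⟨u, hu, rfl⟩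

lemma genInv_le (h : IsGenInv I f finv) (ht : t ∈ I)
    (hs : s ∈ convexHull ℝ (f '' I)) (hst : s ≤ f t) : finv s ≤ t := by
  have := h.1 hs (hull_mem ht) hst
  rwa [h.2.2.2 t ht] at this

lemma genInv_ge (h : IsGenInv I f finv) (ht : t ∈ I)
    (hs : s ∈ convexHull ℝ (f '' I)) (hst : f t ≤ s) : t ≤ finv s := by
  have := h.1 (hull_mem ht) hs hst
  rwa [h.2.2.2 t ht] at this

lemma left_aux (hIo : IsOpen I) (ht : t ∈ I) : ∀ᶠ u in 𝓝[<] t, u ∈ I ∧ u < t :=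
  ((hIo.eventually_mem ht).filter_mono nhdsWithin_le_nhds).and
    (eventually_mem_nhdsWithin)

lemma right_aux (hIo : IsOpen I) (ht : t ∈ I) : ∀ᶠ u in 𝓝[>] t, u ∈ I ∧ t < u :=
  ((hIo.eventually_mem ht).filter_mono nhdsWithin_le_nhds).and
    (eventually_mem_nhdsWithin)

lemma genInv_lt_left (hIo : IsOpen I) (h : IsGenInv I f finv) (ht : t ∈ I)
    (hL : Tendsto f (𝓝[<] t) (𝓝 L)) (hs : s ∈ convexHull ℝ (f '' I)) (hsL : s < L) :
    finv s < t := by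
  obtain ⟨u, ⟨huI, hut⟩, hfu⟩ :=
    ((left_aux hIo ht).and (hL.eventually (eventually_gt_nhds hsL))).exists
  have h1 : finv s ≤ u := by
    have := h.1 hs (hull_mem huI) hfu.le
    rwa [h.2.2.2 u huI] at this
  exact lt_of_le_of_lt h1 hut

lemma genInv_gt_right (hIo : IsOpen I) (h : IsGenInv I f finv) (ht : t ∈ I)
    (hL : Tendsto f (𝓝[>] t) (𝓝 L)) (hs : s ∈ convexHull ℝ (f '' I)) (hsL : L < s) :
    t < finv s := by
  obtain ⟨u, ⟨huI, hut⟩, hfu⟩ :=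
    ((right_aux hIo ht).and (hL.eventually (eventually_lt_nhds hsL))).exists
  have h1 : u ≤ finv s := by
    have := h.1 (hull_mem huI) hs hfu.le
    rwa [h.2.2.2 u huI] at this
  exact lt_of_lt_of_le hut h1

lemma genInv_ge_left (hIo : IsOpen I) (h : IsGenInv I f finv) (ht : t ∈ I)
    (hL : Tendsto f (𝓝[<] t) (𝓝 L)) (hs : s ∈ convexHull ℝ (f '' I)) (hsL : L < s) :
    t ≤ finv s := by
  have hev : ∀ᶠ u in 𝓝[<] t, u ≤ finv s := by
    filter_upwards [left_aux hIo ht, hL.eventually (eventually_lt_nhds hsL)]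
      with u hu hfu
    have := h.1 (hull_mem hu.1) hs hfu.le
    rwa [h.2.2.2 u hu.1] at this
  exact le_of_tendsto (tendsto_id.mono_right nhdsWithin_le_nhds) hev

lemma genInv_le_right (hIo : IsOpen I) (h : IsGenInv I f finv) (ht : t ∈ I)
    (hL : Tendsto f (𝓝[>] t) (𝓝 L)) (hs : s ∈ convexHull ℝ (f '' I)) (hsL : s < L) :
    finv s ≤ t := by
  have hev : ∀ᶠ u in 𝓝[>] t, finv s ≤ u := by
    filter_upwards [right_aux hIo ht, hL.eventually (eventually_gt_nhds hsL)]
      with u hu hfu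
    have := h.1 hs (hull_mem hu.1) hfu.le
    rwa [h.2.2.2 u hu.1] at this
  exact ge_of_tendsto (tendsto_id.mono_right nhdsWithin_le_nhds) hev

lemma leftLim_le (hIo : IsOpen I) (hf : StrictMonoOn f I) (ht : t ∈ I)
    (hL : Tendsto f (𝓝[<] t) (𝓝 L)) : L ≤ f t := by
  refine le_of_tendsto hL ?_
  filter_upwards [left_aux hIo ht] with u hu
  exact (hf hu.1 ht hu.2).le

lemma le_rightLim (hIo : IsOpen I) (hf : StrictMonoOn f I) (ht : t ∈ I)
    (hL : Tendsto f (𝓝[>] t) (𝓝 L)) : f t ≤ L := by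
  refine ge_of_tendsto hL ?_
  filter_upwards [right_aux hIo ht] with u hu
  exact (hf ht hu.1 hu.2).le

lemma le_leftLim (hIo : IsOpen I) (hf : StrictMonoOn f I) (ht : t ∈ I)
    (hL : Tendsto f (𝓝[<] t) (𝓝 L)) (hu : u ∈ I) (hut : u < t) : f u ≤ L := by
  refine ge_of_tendsto hL ?_
  have hIoo : Ioo u t ∈ 𝓝[<] t := Ioo_mem_nhdsLT_of_mem ⟨hut, le_refl t⟩
  filter_upwards [left_aux hIo ht, hIoo] with w hw hw2
  exact (hf hu hw.1 hw2.1).le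

lemma rightLim_le' (hIo : IsOpen I) (hf : StrictMonoOn f I) (ht : t ∈ I)
    (hL : Tendsto f (𝓝[>] t) (𝓝 L)) (hu : u ∈ I) (hut : t < u) : L ≤ f u := by
  refine le_of_tendsto hL ?_
  have hIoo : Ioo t u ∈ 𝓝[>] t := Ioo_mem_nhdsGT_of_mem ⟨le_refl t, hut⟩
  filter_upwards [right_aux hIo ht, hIoo] with w hw hw2
  exact (hf hw.1 hu hw2.2).le

lemma sum_three {n : ℕ} {i0 i1 : Fin n} (hne : i0 ≠ i1) (a b c : ℝ) :
    ∑ i : Fin n, (if i = i0 then a else if i = i1 then b else c)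
      = a + b + ((n : ℝ) - 2) * c := by
  have key : ∀ i : Fin n, (if i = i0 then a else if i = i1 then b else c)
      = (if i = i0 then a - c else 0) + ((if i = i1 then b - c else 0) + c) := by
    intro i
    rcases eq_or_ne i i0 with h | h
    · rcases eq_or_ne i i1 with h' | h'
      · exact absurd (h.symm.trans h') hne
      · simp [h, h', hne]
    · rcases eq_or_ne i i1 with h' | h'
      · simp [h, h', Ne.symm hne]
      · simp [h, h']
  rw [Finset.sum_congr rfl fun i _ => key i, Finset.sum_add_distrib,
    Finset.sum_add_distrib, Finset.sum_ite_eq', Finset.sum_ite_eq',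
    Finset.sum_const]
  have h0 : i0 ∈ Finset.univ := Finset.mem_univ _
  have h1 : i1 ∈ Finset.univ := Finset.mem_univ _
  simp only [h0, h1, if_true, Finset.card_univ, Fintype.card_fin, nsmul_eq_mul]
  ring

lemma mean_mem_hull (f : ℝ → ℝ) {I : Set ℝ} {n : ℕ} (hn : 0 < n) (x : Fin n → ℝ)
    (hx : ∀ i, x i ∈ I) : (∑ i, f (x i)) / n ∈ convexHull ℝ (f '' I) := by
  have hc : Convex ℝ (convexHull ℝ (f '' I)) := convex_convexHull ℝ _
  have hn' : (0 : ℝ) < n := by exact_mod_cast hn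
  have hsum : ∑ _i : Fin n, ((n : ℝ)⁻¹) = 1 := by
    rw [Finset.sum_const, Finset.card_univ, Fintype.card_fin, nsmul_eq_mul]
    field_simp
  have hmem := hc.sum_mem (t := Finset.univ) (w := fun _ => ((n : ℝ))⁻¹)
    (fun _ _ => by positivity) hsum (fun i _ => hull_mem (hx i))
  have heq : ∑ i : Fin n, ((n : ℝ))⁻¹ • f (x i) = (∑ i, f (x i)) / n := by
    rw [div_eq_inv_mul, Finset.mul_sum]
    simp [smul_eq_mul]
  rwa [heq] at hmem

lemma special_mean_mem (f : ℝ → ℝ) {I : Set ℝ} {n : ℕ} (hn : 2 ≤ n) {t u v : ℝ}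
    (ht : t ∈ I) (hu : u ∈ I) (hv : v ∈ I) :
    (f u + f v + ((n : ℝ) - 2) * f t) / n ∈ convexHull ℝ (f '' I) := by
  set i0 : Fin n := ⟨0, by omega⟩
  set i1 : Fin n := ⟨1, by omega⟩
  have hne : i0 ≠ i1 := by simp [i0, i1, Fin.ext_iff]
  set x : Fin n → ℝ := fun i => if i = i0 then u else if i = i1 then v else t with hxdef
  have hx : ∀ i, x i ∈ I := by
    intro i; simp only [hxdef]; split_ifs <;> assumption
  have hsf : ∑ i, f (x i) = f u + f v + ((n : ℝ) - 2) * f t := by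
    have h1 : ∀ i, f (x i) = if i = i0 then f u else if i = i1 then f v else f t := by
      intro i; simp only [hxdef]; split_ifs <;> rfl
    rw [Finset.sum_congr rfl fun i _ => h1 i, sum_three hne]
  have := mean_mem_hull f (by omega : 0 < n) x hx
  rwa [hsf] at this

lemma cont_iff {I : Set ℝ} (hIo : IsOpen I) {h : ℝ → ℝ} {t L M : ℝ} (ht : t ∈ I)
    (hm : Tendsto h (𝓝[<] t) (𝓝 L)) (hp : Tendsto h (𝓝[>] t) (𝓝 M)) :
    ContinuousWithinAt h I t ↔ (L = h t ∧ M = h t) := by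
  rw [continuousWithinAt_iff_continuousAt (hIo.mem_nhds ht),
    continuousAt_iff_continuous_left'_right']
  constructor
  · rintro ⟨h1, h2⟩
    exact ⟨tendsto_nhds_unique hm h1, tendsto_nhds_unique hp h2⟩
  · rintro ⟨rfl, rfl⟩
    exact ⟨hm, hp⟩

end Aux

/-- if `A_f^{[n]} ≤ A_g^{[n]}` on `Iⁿ` for some `n ≥ 2`, then at every
`t ∈ I`: lower semicontinuity of `g` implies that of `f`, upper semicontinuity of `f`
implies that of `g`, and `f` is continuous at `t` iff `g` is. -/
theorem stmt17 (I : Set ℝ) (hIo : IsOpen I) (hIc : I.OrdConnected) (hne : I.Nonempty)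
    (f g fm fp gm gp finvf finvg : ℝ → ℝ)
    (hf : StrictMonoOn f I) (hg : StrictMonoOn g I)
    (hfm : ∀ x ∈ I, Tendsto f (𝓝[<] x) (𝓝 (fm x)))
    (hfp : ∀ x ∈ I, Tendsto f (𝓝[>] x) (𝓝 (fp x)))
    (hgm : ∀ x ∈ I, Tendsto g (𝓝[<] x) (𝓝 (gm x)))
    (hgp : ∀ x ∈ I, Tendsto g (𝓝[>] x) (𝓝 (gp x)))
    (hinvf : IsGenInv I f finvf) (hinvg : IsGenInv I g finvg)
    (n : ℕ) (hn : 2 ≤ n)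
    (hcomp : ∀ x : Fin n → ℝ, (∀ i, x i ∈ I) → qam finvf f n x ≤ qam finvg g n x) :
    ∀ t ∈ I,
      (gm t = g t → fm t = f t) ∧
      (fp t = f t → gp t = g t) ∧
      (ContinuousWithinAt f I t ↔ ContinuousWithinAt g I t) := by
  intro t ht
  have hn' : (2 : ℝ) ≤ (n : ℝ) := by exact_mod_cast hn
  have hnpos : (0 : ℝ) < (n : ℝ) := by linarith
  -- the comparison inequality specialized to (u, v, t, t, ..., t)
  have key : ∀ u ∈ I, ∀ v ∈ I,
      finvf ((f u + f v + ((n : ℝ) - 2) * f t) / n)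
        ≤ finvg ((g u + g v + ((n : ℝ) - 2) * g t) / n) := by
    intro u hu v hv
    set i0 : Fin n := ⟨0, by omega⟩
    set i1 : Fin n := ⟨1, by omega⟩
    have hne01 : i0 ≠ i1 := by simp [i0, i1, Fin.ext_iff]
    set x : Fin n → ℝ := fun i => if i = i0 then u else if i = i1 then v else t with hxdef
    have hx : ∀ i, x i ∈ I := by
      intro i; simp only [hxdef]; split_ifs <;> assumption
    have hsf : ∑ i, f (x i) = f u + f v + ((n : ℝ) - 2) * f t := by
      have h1 : ∀ i, f (x i) = if i = i0 then f u else if i = i1 then f v else f t := by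
        intro i; simp only [hxdef]; split_ifs <;> rfl
      rw [Finset.sum_congr rfl fun i _ => h1 i, sum_three hne01]
    have hsg : ∑ i, g (x i) = g u + g v + ((n : ℝ) - 2) * g t := by
      have h1 : ∀ i, g (x i) = if i = i0 then g u else if i = i1 then g v else g t := by
        intro i; simp only [hxdef]; split_ifs <;> rfl
      rw [Finset.sum_congr rfl fun i _ => h1 i, sum_three hne01]
    have := hcomp x hx
    rw [qam, qam, hsf, hsg] at this
    exact this
  have hfm_le : fm t ≤ f t := leftLim_le hIo hf ht (hfm t ht)
  have hfp_ge : f t ≤ fp t := le_rightLim hIo hf ht (hfp t ht)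
  have hgm_le : gm t ≤ g t := leftLim_le hIo hg ht (hgm t ht)
  have hgp_ge : g t ≤ gp t := le_rightLim hIo hg ht (hgp t ht)
  -- Claim 1 : lower semicontinuity transfers from g to f
  have claim1 : gm t = g t → fm t = f t := by
    intro hge
    by_contra hne1
    have hlt : fm t < f t := lt_of_le_of_ne hfm_le hne1
    have hcond : (n : ℝ) * fm t - ((n : ℝ) - 1) * f t < fm t := by nlinarith
    obtain ⟨u, ⟨huI, hut⟩, hfu⟩ :=
      ((left_aux hIo ht).and ((hfm t ht).eventually (eventually_gt_nhds hcond))).exists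
    have hmf : fm t < (f u + f t + ((n : ℝ) - 2) * f t) / n := by
      rw [lt_div_iff₀ hnpos]; nlinarith
    have hmg : (g u + g t + ((n : ℝ) - 2) * g t) / n < g t := by
      have : g u < g t := hg huI ht hut
      rw [div_lt_iff₀ hnpos]; nlinarith
    have h1 : t ≤ finvf ((f u + f t + ((n : ℝ) - 2) * f t) / n) :=
      genInv_ge_left hIo hinvf ht (hfm t ht) (special_mean_mem f hn ht huI ht) hmf
    have h2 : finvg ((g u + g t + ((n : ℝ) - 2) * g t) / n) < t :=
      genInv_lt_left hIo hinvg ht (hgm t ht) (special_mean_mem g hn ht huI ht)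
        (by rw [hge]; exact hmg)
    have := key u huI t ht
    linarith
  -- Claim 2 : upper semicontinuity transfers from f to g
  have claim2 : fp t = f t → gp t = g t := by
    intro hfe
    by_contra hne2
    have hlt : g t < gp t := lt_of_le_of_ne hgp_ge (Ne.symm hne2)
    have hcond : gp t < (n : ℝ) * gp t - ((n : ℝ) - 1) * g t := by nlinarith
    obtain ⟨v, ⟨hvI, htv⟩, hgv⟩ :=
      ((right_aux hIo ht).and ((hgp t ht).eventually (eventually_lt_nhds hcond))).exists
    have hmg : (g v + g t + ((n : ℝ) - 2) * g t) / n < gp t := by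
      rw [div_lt_iff₀ hnpos]; nlinarith
    have hmf : f t < (f v + f t + ((n : ℝ) - 2) * f t) / n := by
      have : f t < f v := hf ht hvI htv
      rw [lt_div_iff₀ hnpos]; nlinarith
    have h1 : t < finvf ((f v + f t + ((n : ℝ) - 2) * f t) / n) :=
      genInv_gt_right hIo hinvf ht (hfp t ht) (special_mean_mem f hn ht hvI ht)
        (by rw [hfe]; exact hmf)
    have h2 : finvg ((g v + g t + ((n : ℝ) - 2) * g t) / n) ≤ t :=
      genInv_le_right hIo hinvg ht (hgp t ht) (special_mean_mem g hn ht hvI ht) hmg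
    have := key v hvI t ht
    linarith
  -- Claim 3 : if f is continuous at t then g is lower semicontinuous at t
  have claim3 : fm t = f t ∧ fp t = f t → gm t = g t := by
    rintro ⟨hfmE, hfpE⟩
    have hgpE : gp t = g t := claim2 hfpE
    by_contra hne3
    have hlt : gm t < g t := lt_of_le_of_ne hgm_le hne3
    have hc1 : gp t < 2 * g t - gm t := by rw [hgpE]; linarith
    obtain ⟨v, ⟨hvI, htv⟩, hgv⟩ :=
      ((right_aux hIo ht).and ((hgp t ht).eventually (eventually_lt_nhds hc1))).exists
    have hfv : f t < f v := hf ht hvI htv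
    have hc2 : 2 * f t - f v < fm t := by rw [hfmE]; linarith
    obtain ⟨u, ⟨huI, hut⟩, hfu⟩ :=
      ((left_aux hIo ht).and ((hfm t ht).eventually (eventually_gt_nhds hc2))).exists
    have hgu : g u ≤ gm t := le_leftLim hIo hg ht (hgm t ht) huI hut
    have hmf : f t < (f u + f v + ((n : ℝ) - 2) * f t) / n := by
      rw [lt_div_iff₀ hnpos]; nlinarith
    have hmg : (g u + g v + ((n : ℝ) - 2) * g t) / n < g t := by
      rw [div_lt_iff₀ hnpos]; nlinarith
    have h1 : t < finvf ((f u + f v + ((n : ℝ) - 2) * f t) / n) :=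
      genInv_gt_right hIo hinvf ht (hfp t ht) (special_mean_mem f hn ht huI hvI)
        (by rw [hfpE]; exact hmf)
    have h2 : finvg ((g u + g v + ((n : ℝ) - 2) * g t) / n) ≤ t :=
      genInv_le hinvg ht (special_mean_mem g hn ht huI hvI) hmg.le
    have := key u huI v hvI
    linarith
  -- Claim 4 : if g is continuous at t then f is upper semicontinuous at t
  have claim4 : gm t = g t ∧ gp t = g t → fp t = f t := by
    rintro ⟨hgmE, hgpE⟩
    have hfmE : fm t = f t := claim1 hgmE
    by_contra hne4
    have hlt : f t < fp t := lt_of_le_of_ne hfp_ge (Ne.symm hne4)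
    have hc1 : 2 * f t - fp t < fm t := by rw [hfmE]; linarith
    obtain ⟨u, ⟨huI, hut⟩, hfu⟩ :=
      ((left_aux hIo ht).and ((hfm t ht).eventually (eventually_gt_nhds hc1))).exists
    have hgu : g u < g t := hg huI ht hut
    have hc2 : gp t < 2 * g t - g u := by rw [hgpE]; linarith
    obtain ⟨v, ⟨hvI, htv⟩, hgv⟩ :=
      ((right_aux hIo ht).and ((hgp t ht).eventually (eventually_lt_nhds hc2))).exists
    have hfv : fp t ≤ f v := rightLim_le' hIo hf ht (hfp t ht) hvI htv
    have hmf : f t ≤ (f u + f v + ((n : ℝ) - 2) * f t) / n := by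
      rw [le_div_iff₀ hnpos]; nlinarith
    have hmg : (g u + g v + ((n : ℝ) - 2) * g t) / n < g t := by
      rw [div_lt_iff₀ hnpos]; nlinarith
    have h1 : t ≤ finvf ((f u + f v + ((n : ℝ) - 2) * f t) / n) :=
      genInv_ge hinvf ht (special_mean_mem f hn ht huI hvI) hmf
    have h2 : finvg ((g u + g v + ((n : ℝ) - 2) * g t) / n) < t :=
      genInv_lt_left hIo hinvg ht (hgm t ht) (special_mean_mem g hn ht huI hvI)
        (by rw [hgmE]; exact hmg)
    have := key u huI v hvI
    linarith
  refine ⟨claim1, claim2, ?_⟩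
  rw [cont_iff hIo ht (hfm t ht) (hfp t ht), cont_iff hIo ht (hgm t ht) (hgp t ht)]
  constructor
  · rintro ⟨h1, h2⟩
    exact ⟨claim3 ⟨h1, h2⟩, claim2 h2⟩
  · rintro ⟨h1, h2⟩
    exact ⟨claim1 h1, claim4 ⟨h1, h2⟩⟩
end
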